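/- Let (Ω, F, μ) be a measure space, f_i : Ω → [0,∞) measurable for i ∈ ℕ, and 1 < p_i < ∞ with ∑_{i=1}^∞ 1/p_i = 1. If the infinite product ∏_{i=1}^∞ ‖f_i‖_{L^{p_i}} converges to a finite value, then the pointwise product ∏_{i=1}^∞ f_i is well defined almost everywhere and ‖∏_{i=1}^∞ f_i‖_{L^1} ≤ ∏_{i=1}^∞ ‖f_i‖_{L^{p_i}}. -/

import Mathlib

/-!
Normalise so that every `‖f i‖_{p i}` equals one: a vanishing norm makes the product vanish
a.e., and an infinite one would force `L = ∞`. Writing `H i` for the normalised functions, the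
partial products split as `∏ min (H i) 1 * ∏ max (H i) 1`, a decreasing times an increasing
sequence, so they converge wherever the increasing one stays bounded.

On a set `E` of finite measure the exponents `1 / p i`, `i < n`, sum to `s n ≤ 1`, and Hölder's
inequality with the constant `1` carrying the exponent `1 - s n` gives
`∫_E ∏_{i<n} G i ≤ ∏_{i<n} ‖G i‖_{p i} * μ(E) ^ (1 - s n)`. For `G i = max (H i) 1` this
bounds `∫_E ∏ max (H i) 1` uniformly in `n`, so the limit is finite a.e. on `E`; for
`G i = H i`, Fatou's lemma and `s n → 1` give `∫_E lim ∏ H i ≤ 1`. The sets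
`{H 0 ^ p 0 ≥ 1 / (k + 1)}` have finite measure and exhaust the set where the product can be
nonzero.
-/

open MeasureTheory Filter
open scoped ENNReal Topology

theorem tendsto_prod_range_of_eq_zero {M : Type*} [CommMonoidWithZero M] [TopologicalSpace M]
    {a : ℕ → M} {i : ℕ} (hi : a i = 0) :
    Tendsto (fun n => ∏ j ∈ Finset.range n, a j) atTop (𝓝 0) :=
  tendsto_const_nhds.congr' <| (eventually_gt_atTop i).mono fun _ hn =>
    (Finset.prod_eq_zero (Finset.mem_range.mpr hn) hi).symm

theorem monotone_prod_range_max_one {M : Type*} [CommMonoid M] [LinearOrder M] [MulLeftMono M]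
    (a : ℕ → M) : Monotone fun n => ∏ i ∈ Finset.range n, max (a i) 1 :=
  monotone_nat_of_le_succ fun n => by
    rw [Finset.prod_range_succ]
    exact le_mul_of_one_le_right' (le_max_right _ _)

theorem antitone_prod_range_min_one {M : Type*} [CommMonoid M] [LinearOrder M] [MulLeftMono M]
    (a : ℕ → M) : Antitone fun n => ∏ i ∈ Finset.range n, min (a i) 1 :=
  antitone_nat_of_succ_le fun n => by
    rw [Finset.prod_range_succ]
    exact mul_le_of_le_one_right' (min_le_right _ _)

namespace ENNReal

theorem rpow_sum_of_nonneg {ι : Type*} (a : ℝ≥0∞) {s : Finset ι} {t : ι → ℝ}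
    (ht : ∀ i ∈ s, 0 ≤ t i) : a ^ (∑ i ∈ s, t i) = ∏ i ∈ s, a ^ t i := by
  classical
  induction s using Finset.induction_on with
  | empty => simp
  | insert j s hj ih =>
    rw [Finset.sum_insert hj, Finset.prod_insert hj,
      ENNReal.rpow_add_of_nonneg _ _ (ht j (Finset.mem_insert_self j s))
        (Finset.sum_nonneg fun i hi => ht i (Finset.mem_insert_of_mem hi)),
      ih fun i hi => ht i (Finset.mem_insert_of_mem hi)]

theorem tendsto_const_rpow_of_tendsto_zero {α : Type*} {l : Filter α} {a : ℝ≥0∞}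
    (ha₀ : a ≠ 0) (ha : a ≠ ∞) {t : α → ℝ} (ht : Tendsto t l (𝓝 0)) :
    Tendsto (fun x => a ^ t x) l (𝓝 1) := by
  have hpos : 0 < a.toReal := ENNReal.toReal_pos ha₀ ha
  have hreal : Tendsto (fun x => a.toReal ^ t x) l (𝓝 1) := by
    simpa [Function.comp_def] using (Real.continuousAt_const_rpow hpos.ne').tendsto.comp ht
  refine (ENNReal.ofReal_one ▸ ENNReal.tendsto_ofReal hreal).congr fun x => ?_
  rw [← ENNReal.ofReal_rpow_of_pos hpos, ENNReal.ofReal_toReal ha]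

theorem tendsto_prod_range_of_iSup_prod_max_ne_top {a : ℕ → ℝ≥0∞}
    (h : ⨆ n, ∏ i ∈ Finset.range n, max (a i) 1 ≠ ∞) :
    Tendsto (fun n => ∏ i ∈ Finset.range n, a i) atTop
      (𝓝 ((⨅ n, ∏ i ∈ Finset.range n, min (a i) 1) * ⨆ n, ∏ i ∈ Finset.range n, max (a i) 1)) := by
  have hinf : ⨅ n, ∏ i ∈ Finset.range n, min (a i) 1 ≠ ∞ :=
    ne_top_of_le_ne_top one_ne_top (iInf_le_of_le 0 (by simp))
  refine (ENNReal.Tendsto.mul (tendsto_atTop_iInf (antitone_prod_range_min_one a)) (.inr h)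
    (tendsto_atTop_iSup (monotone_prod_range_max_one a)) (.inr hinf)).congr fun n => ?_
  rw [← Finset.prod_mul_distrib]
  exact Finset.prod_congr rfl fun i _ => by rw [min_mul_max, mul_one]

theorem tendsto_prod_range_liminf {a : ℕ → ℝ≥0∞}
    (h : (∃ i, a i = 0) ∨ ⨆ n, ∏ i ∈ Finset.range n, max (a i) 1 ≠ ∞) :
    Tendsto (fun n => ∏ i ∈ Finset.range n, a i) atTop
      (𝓝 (liminf (fun n => ∏ i ∈ Finset.range n, a i) atTop)) := by
  obtain ⟨l, hl⟩ : ∃ l, Tendsto (fun n => ∏ i ∈ Finset.range n, a i) atTop (𝓝 l) := by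
    rcases h with ⟨i, hi⟩ | h
    · exact ⟨0, tendsto_prod_range_of_eq_zero hi⟩
    · exact ⟨_, tendsto_prod_range_of_iSup_prod_max_ne_top h⟩
  rwa [hl.liminf_eq]

theorem ne_top_of_tendsto_prod_range {c : ℕ → ℝ≥0∞} {L : ℝ≥0∞} (hc : ∀ i, c i ≠ 0) (hL : L ≠ ∞)
    (h : Tendsto (fun n => ∏ i ∈ Finset.range n, c i) atTop (𝓝 L)) (i : ℕ) : c i ≠ ∞ := by
  classical
  intro hi
  refine hL (tendsto_nhds_unique h (tendsto_const_nhds.congr' ?_))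
  filter_upwards [eventually_gt_atTop i] with n hn
  exact (WithTop.prod_eq_top_iff.2 ⟨⟨i, Finset.mem_range.2 hn, hi⟩, fun j _ => hc j⟩).symm

section Holder

variable {α ι : Type*} [MeasurableSpace α] {μ : Measure α}

theorem lintegral_prod_rpow_le_mul_measure_univ_rpow (s : Finset ι) {f : ι → α → ℝ≥0∞}
    (hf : ∀ i ∈ s, AEMeasurable (f i) μ) {t : ι → ℝ} (ht : ∀ i ∈ s, 0 ≤ t i)
    (hts : ∑ i ∈ s, t i ≤ 1) :
    ∫⁻ a, ∏ i ∈ s, f i a ^ t i ∂μ ≤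
      (∏ i ∈ s, (∫⁻ a, f i a ∂μ) ^ t i) * μ Set.univ ^ (1 - ∑ i ∈ s, t i) := by
  -- Hölder for the family extended by the constant `1` carrying the missing exponent.
  have key := ENNReal.lintegral_prod_norm_pow_le (μ := μ) (Finset.insertNone s)
    (f := fun o => o.elim (fun _ => 1) f) (p := fun o => o.elim (1 - ∑ i ∈ s, t i) t)
    (Finset.forall_mem_insertNone.2 ⟨aemeasurable_const, hf⟩)
    (by simp [Finset.sum_insertNone])
    (Finset.forall_mem_insertNone.2 ⟨sub_nonneg.2 hts, ht⟩)
  simpa [Finset.prod_insertNone, mul_comm] using key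

theorem lintegral_prod_le_rpow_mul_measure_univ_rpow (s : Finset ι) {f : ι → α → ℝ≥0∞}
    (hf : ∀ i ∈ s, AEMeasurable (f i) μ) {p : ι → ℝ} (hp : ∀ i ∈ s, 0 < p i)
    (hps : ∑ i ∈ s, 1 / p i ≤ 1) {M : ℝ≥0∞} (hM : ∀ i ∈ s, ∫⁻ a, f i a ^ p i ∂μ ≤ M) :
    ∫⁻ a, ∏ i ∈ s, f i a ∂μ ≤
      M ^ (∑ i ∈ s, 1 / p i) * μ Set.univ ^ (1 - ∑ i ∈ s, 1 / p i) := by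
  have hrpow : ∀ a, ∏ i ∈ s, f i a = ∏ i ∈ s, (f i a ^ p i) ^ (1 / p i) := fun a =>
    Finset.prod_congr rfl fun i hi => by rw [one_div, ENNReal.rpow_rpow_inv (hp i hi).ne']
  calc ∫⁻ a, ∏ i ∈ s, f i a ∂μ
      = ∫⁻ a, ∏ i ∈ s, (f i a ^ p i) ^ (1 / p i) ∂μ := by simp_rw [hrpow]
    _ ≤ (∏ i ∈ s, (∫⁻ a, f i a ^ p i ∂μ) ^ (1 / p i)) * μ Set.univ ^ (1 - ∑ i ∈ s, 1 / p i) :=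
      lintegral_prod_rpow_le_mul_measure_univ_rpow s (fun i hi => (hf i hi).pow_const _)
        (fun i hi => (one_div_pos.2 (hp i hi)).le) hps
    _ ≤ (∏ i ∈ s, M ^ (1 / p i)) * μ Set.univ ^ (1 - ∑ i ∈ s, 1 / p i) := by
      gcongr with i hi
      exacts [(one_div_pos.2 (hp i hi)).le, hM i hi]
    _ = M ^ (∑ i ∈ s, 1 / p i) * μ Set.univ ^ (1 - ∑ i ∈ s, 1 / p i) := by
      rw [ENNReal.rpow_sum_of_nonneg _ fun i hi => (one_div_pos.2 (hp i hi)).le]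

end Holder

end ENNReal

theorem exists_monotone_measure_ne_top_iUnion_eq {α : Type*} [MeasurableSpace α] {μ : Measure α}
    {g : α → ℝ≥0∞} (hg : Measurable g) (hgi : ∫⁻ x, g x ∂μ ≠ ∞) :
    ∃ S : ℕ → Set α, (∀ k, MeasurableSet (S k)) ∧ (∀ k, μ (S k) ≠ ∞) ∧ Monotone S ∧
      ⋃ k, S k = {x | g x ≠ 0} := by
  refine ⟨fun k => {x | ((k : ℝ≥0∞) + 1)⁻¹ ≤ g x}, fun k => measurableSet_le measurable_const hg,
    fun k => ?_, fun k l hkl x hx => ?_, ?_⟩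
  · refine ne_top_of_le_ne_top ?_ (meas_ge_le_lintegral_div hg.aemeasurable ?_ ?_)
    · exact ENNReal.div_ne_top hgi (by simp)
    · simp
    · simp
  · exact le_trans (ENNReal.inv_le_inv.2 (by gcongr)) hx
  · ext x
    simp only [Set.mem_iUnion, Set.mem_ofPred_eq]
    refine ⟨fun ⟨k, hk⟩ => (lt_of_lt_of_le (by simp) hk).ne', fun hx => ?_⟩
    obtain ⟨k, hk⟩ := ENNReal.exists_inv_nat_lt hx
    exact ⟨k, le_trans (by gcongr; exact le_self_add) hk.le⟩

section NormalizedProduct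

variable {Ω : Type*} [MeasurableSpace Ω] {μ : Measure Ω} {p : ℕ → ℝ} {H : ℕ → Ω → ℝ≥0∞}

theorem sum_range_one_div_le_one (hp : ∀ i, 0 < p i) (hps : HasSum (fun i => 1 / p i) 1)
    (n : ℕ) : ∑ i ∈ Finset.range n, 1 / p i ≤ 1 :=
  sum_le_hasSum _ (fun i _ => (one_div_pos.2 (hp i)).le) hps

theorem ae_iSup_prod_max_one_ne_top [IsFiniteMeasure μ] (hp : ∀ i, 0 < p i)
    (hps : HasSum (fun i => 1 / p i) 1) (hH : ∀ i, Measurable (H i))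
    (hnorm : ∀ i, ∫⁻ x, H i x ^ p i ∂μ ≤ 1) :
    ∀ᵐ x ∂μ, ⨆ n, ∏ i ∈ Finset.range n, max (H i x) 1 ≠ ∞ := by
  set M := 1 + μ Set.univ
  have hmax : ∀ i, ∫⁻ x, max (H i x) 1 ^ p i ∂μ ≤ M := fun i => calc
    ∫⁻ x, max (H i x) 1 ^ p i ∂μ ≤ ∫⁻ x, (H i x ^ p i + 1) ∂μ := lintegral_mono fun x => by
        rcases le_total (H i x) 1 with h | h
        · rw [max_eq_right h, ENNReal.one_rpow]; exact le_add_self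
        · rw [max_eq_left h]; exact le_self_add
    _ = ∫⁻ x, H i x ^ p i ∂μ + μ Set.univ := by
        rw [lintegral_add_right _ measurable_const, lintegral_one]
    _ ≤ M := add_le_add_left (hnorm i) _
  have hbound : ∀ n, ∫⁻ x, ∏ i ∈ Finset.range n, max (H i x) 1 ∂μ ≤ M := fun n => by
    set s := ∑ i ∈ Finset.range n, 1 / p i
    have hs₀ : 0 ≤ s := Finset.sum_nonneg fun i _ => (one_div_pos.2 (hp i)).le
    have hs₁ : 0 ≤ 1 - s := sub_nonneg.2 (sum_range_one_div_le_one hp hps n)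
    calc ∫⁻ x, ∏ i ∈ Finset.range n, max (H i x) 1 ∂μ ≤ M ^ s * μ Set.univ ^ (1 - s) :=
          ENNReal.lintegral_prod_le_rpow_mul_measure_univ_rpow _
            (fun i _ => ((hH i).max measurable_const).aemeasurable) (fun i _ => hp i)
            (sum_range_one_div_le_one hp hps n) fun i _ => hmax i
      _ ≤ M ^ s * M ^ (1 - s) := by gcongr; exact le_add_self
      _ = M := by rw [← ENNReal.rpow_add_of_nonneg _ _ hs₀ hs₁, add_sub_cancel, ENNReal.rpow_one]
  have hint : ∫⁻ x, ⨆ n, ∏ i ∈ Finset.range n, max (H i x) 1 ∂μ ≠ ∞ := by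
    rw [lintegral_iSup (fun n => Finset.measurable_prod _ fun i _ => (hH i).max measurable_const)
      fun m n hmn x => monotone_prod_range_max_one (H · x) hmn]
    exact ne_top_of_le_ne_top (ENNReal.add_ne_top.2 ⟨ENNReal.one_ne_top, measure_ne_top _ _⟩)
      (iSup_le hbound)
  filter_upwards [ae_lt_top (Measurable.iSup fun n => Finset.measurable_prod _ fun i _ =>
    (hH i).max measurable_const) hint] with x hx using hx.ne

theorem lintegral_liminf_prod_le_one_of_isFiniteMeasure [IsFiniteMeasure μ] (hp : ∀ i, 0 < p i)
    (hps : HasSum (fun i => 1 / p i) 1) (hH : ∀ i, Measurable (H i))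
    (hnorm : ∀ i, ∫⁻ x, H i x ^ p i ∂μ ≤ 1) :
    ∫⁻ x, liminf (fun n => ∏ i ∈ Finset.range n, H i x) atTop ∂μ ≤ 1 := by
  rcases eq_zero_or_neZero μ with rfl | hμ
  · simp
  have hbound : ∀ n, ∫⁻ x, ∏ i ∈ Finset.range n, H i x ∂μ ≤
      μ Set.univ ^ (1 - ∑ i ∈ Finset.range n, 1 / p i) := fun n => by
    simpa using ENNReal.lintegral_prod_le_rpow_mul_measure_univ_rpow _
      (fun i _ => (hH i).aemeasurable) (fun i _ => hp i) (sum_range_one_div_le_one hp hps n)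
      fun i _ => hnorm i
  have hlim : Tendsto (fun n => μ Set.univ ^ (1 - ∑ i ∈ Finset.range n, 1 / p i)) atTop (𝓝 1) :=
    ENNReal.tendsto_const_rpow_of_tendsto_zero (NeZero.ne _) (measure_ne_top _ _)
      (by simpa using (tendsto_const_nhds (x := (1 : ℝ))).sub hps.tendsto_sum_nat)
  calc ∫⁻ x, liminf (fun n => ∏ i ∈ Finset.range n, H i x) atTop ∂μ
      ≤ liminf (fun n => ∫⁻ x, ∏ i ∈ Finset.range n, H i x ∂μ) atTop :=
        lintegral_liminf_le fun n => Finset.measurable_prod _ fun i _ => hH i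
    _ ≤ liminf (fun n => μ Set.univ ^ (1 - ∑ i ∈ Finset.range n, 1 / p i)) atTop :=
        liminf_le_liminf (Eventually.of_forall hbound)
    _ = 1 := hlim.liminf_eq

theorem ae_tendsto_prod_range_liminf (hp : ∀ i, 0 < p i) (hps : HasSum (fun i => 1 / p i) 1)
    (hH : ∀ i, Measurable (H i)) (hnorm : ∀ i, ∫⁻ x, H i x ^ p i ∂μ ≤ 1) :
    ∀ᵐ x ∂μ, Tendsto (fun n => ∏ i ∈ Finset.range n, H i x) atTop
      (𝓝 (liminf (fun n => ∏ i ∈ Finset.range n, H i x) atTop)) := by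
  obtain ⟨S, hSm, hSfin, -, hSU⟩ := exists_monotone_measure_ne_top_iUnion_eq
    ((hH 0).pow_const (p 0)) ((hnorm 0).trans_lt ENNReal.one_lt_top).ne
  have hS : ∀ k, ∀ᵐ x ∂μ.restrict (S k), ⨆ n, ∏ i ∈ Finset.range n, max (H i x) 1 ≠ ∞ := by
    intro k
    have := isFiniteMeasure_restrict.2 (hSfin k)
    exact ae_iSup_prod_max_one_ne_top hp hps hH fun i =>
      (setLIntegral_le_lintegral _ _).trans (hnorm i)
  have hU := (ae_restrict_iUnion_iff S _).2 hS
  rw [ae_restrict_iff' (MeasurableSet.iUnion hSm), hSU] at hU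
  filter_upwards [hU] with x hx
  refine ENNReal.tendsto_prod_range_liminf ?_
  by_cases h0 : H 0 x = 0
  · exact .inl ⟨0, h0⟩
  · exact .inr (hx ((ENNReal.rpow_eq_zero_iff_of_pos (hp 0)).not.2 h0))

theorem lintegral_liminf_prod_le_one (hp : ∀ i, 0 < p i) (hps : HasSum (fun i => 1 / p i) 1)
    (hH : ∀ i, Measurable (H i)) (hnorm : ∀ i, ∫⁻ x, H i x ^ p i ∂μ ≤ 1) :
    ∫⁻ x, liminf (fun n => ∏ i ∈ Finset.range n, H i x) atTop ∂μ ≤ 1 := by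
  obtain ⟨S, -, hSfin, hSmono, hSU⟩ := exists_monotone_measure_ne_top_iUnion_eq
    ((hH 0).pow_const (p 0)) ((hnorm 0).trans_lt ENNReal.one_lt_top).ne
  have hsupp : (fun x => liminf (fun n => ∏ i ∈ Finset.range n, H i x) atTop).support ⊆
      ⋃ k, S k := by
    rw [hSU]
    intro x hx h0
    exact hx (tendsto_prod_range_of_eq_zero
      ((ENNReal.rpow_eq_zero_iff_of_pos (hp 0)).1 h0)).liminf_eq
  rw [← setLIntegral_eq_of_support_subset hsupp,
    setLIntegral_iUnion_of_directed _ hSmono.directed_le]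
  refine iSup_le fun k => ?_
  have := isFiniteMeasure_restrict.2 (hSfin k)
  exact lintegral_liminf_prod_le_one_of_isFiniteMeasure hp hps hH fun i =>
    (setLIntegral_le_lintegral _ _).trans (hnorm i)

end NormalizedProduct

theorem lintegral_div_rpow_eq_one {Ω : Type*} [MeasurableSpace Ω] {μ : Measure Ω}
    {g : Ω → ℝ≥0∞} {p : ℝ} (hp : 0 < p) (h₀ : ∫⁻ x, g x ^ p ∂μ ≠ 0)
    (hT : ∫⁻ x, g x ^ p ∂μ ≠ ∞) :
    ∫⁻ x, (g x / (∫⁻ y, g y ^ p ∂μ) ^ (1 / p)) ^ p ∂μ = 1 := by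
  simp_rw [ENNReal.div_rpow_of_nonneg _ _ hp.le, ← ENNReal.rpow_mul, one_div_mul_cancel hp.ne',
    ENNReal.rpow_one, div_eq_mul_inv]
  rw [lintegral_mul_const' _ _ (ENNReal.inv_ne_top.2 h₀), ENNReal.mul_inv_cancel h₀ hT]

theorem ENNReal.exists_ae_tendsto_prod_range_lintegral_le {Ω : Type*} [MeasurableSpace Ω]
    {μ : Measure Ω} {p : ℕ → ℝ} (hp : ∀ i, 0 < p i) (hps : HasSum (fun i => 1 / p i) 1)
    {F : ℕ → Ω → ℝ≥0∞} (hF : ∀ i, Measurable (F i)) {L : ℝ≥0∞} (hL : L ≠ ∞)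
    (hprod : Tendsto
      (fun n => ∏ i ∈ Finset.range n, (∫⁻ x, F i x ^ p i ∂μ) ^ (1 / p i)) atTop (𝓝 L)) :
    ∃ G : Ω → ℝ≥0∞, Measurable G ∧
      (∀ᵐ x ∂μ, Tendsto (fun n => ∏ i ∈ Finset.range n, F i x) atTop (𝓝 (G x))) ∧
      ∫⁻ x, G x ∂μ ≤ L := by
  by_cases h₀ : ∃ i, ∫⁻ x, F i x ^ p i ∂μ = 0
  · obtain ⟨i, hi⟩ := h₀
    refine ⟨0, measurable_const, ?_, by simp⟩
    filter_upwards [(lintegral_eq_zero_iff ((hF i).pow_const _)).1 hi] with x hx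
    exact tendsto_prod_range_of_eq_zero ((ENNReal.rpow_eq_zero_iff_of_pos (hp i)).1 hx)
  push Not at h₀
  set c := fun i => (∫⁻ x, F i x ^ p i ∂μ) ^ (1 / p i)
  have hc₀ : ∀ i, c i ≠ 0 := fun i =>
    (ENNReal.rpow_eq_zero_iff_of_pos (one_div_pos.2 (hp i))).not.2 (h₀ i)
  have hcT : ∀ i, c i ≠ ∞ := ENNReal.ne_top_of_tendsto_prod_range hc₀ hL hprod
  set H := fun i x => F i x / c i
  have hH : ∀ i, Measurable (H i) := fun i => (hF i).div_const _
  have hnorm : ∀ i, ∫⁻ x, H i x ^ p i ∂μ ≤ 1 := fun i =>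
    (lintegral_div_rpow_eq_one (hp i) (h₀ i)
      ((ENNReal.rpow_eq_top_iff_of_pos (one_div_pos.2 (hp i))).not.1 (hcT i))).le
  have hGm : Measurable fun x => liminf (fun n => ∏ i ∈ Finset.range n, H i x) atTop :=
    Measurable.liminf fun n => Finset.measurable_prod _ fun i _ => hH i
  have hG₁ := lintegral_liminf_prod_le_one hp hps hH hnorm
  refine ⟨fun x => L * liminf (fun n => ∏ i ∈ Finset.range n, H i x) atTop, hGm.const_mul L,
    ?_, ?_⟩
  · filter_upwards [ae_tendsto_prod_range_liminf hp hps hH hnorm,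
      ae_lt_top hGm (ne_top_of_le_ne_top ENNReal.one_ne_top hG₁)] with x hx hxT
    refine (ENNReal.Tendsto.mul hprod (.inr hxT.ne) hx (.inr hL)).congr fun n => ?_
    rw [← Finset.prod_mul_distrib]
    exact Finset.prod_congr rfl fun i _ => ENNReal.mul_div_cancel (hc₀ i) (hcT i)
  · rw [lintegral_const_mul L hGm]
    exact mul_le_of_le_one_right' hG₁

/-- Generalized Hölder inequality for infinitely many functions: if ∑ 1/(p i) = 1, each
f i is nonnegative measurable, and the infinite product of the norms ‖f i‖_{L^{p i}}
converges to a finite value L, then the pointwise infinite product ∏ f i is well defined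
a.e. and ‖∏ f i‖_{L¹} ≤ L = ∏ ‖f i‖_{L^{p i}}. -/
theorem lintegral_prod_le_prod_norm
    {Ω : Type*} [MeasurableSpace Ω] (μ : Measure Ω)
    (p : ℕ → ℝ) (hp : ∀ i, 1 < p i) (hps : HasSum (fun i => 1 / p i) 1)
    (f : ℕ → Ω → ℝ) (hmeas : ∀ i, Measurable (f i)) (hpos : ∀ i x, 0 ≤ f i x)
    (L : ℝ≥0∞) (hL : L ≠ ⊤)
    (hprod : Tendsto
      (fun n => ∏ i ∈ Finset.range n, (∫⁻ x, ENNReal.ofReal (f i x) ^ p i ∂μ) ^ (1 / p i))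
      atTop (nhds L)) :
    ∃ g : Ω → ℝ,
      (∀ᵐ x ∂μ, Tendsto (fun n => ∏ i ∈ Finset.range n, f i x) atTop (nhds (g x))) ∧
      ∫⁻ x, ENNReal.ofReal (g x) ∂μ ≤ L := by
  obtain ⟨G, hGm, hGlim, hGL⟩ := ENNReal.exists_ae_tendsto_prod_range_lintegral_le
    (fun i => zero_lt_one.trans (hp i)) hps (fun i => (hmeas i).ennreal_ofReal) hL hprod
  refine ⟨fun x => (G x).toReal, ?_, (lintegral_mono fun x => ENNReal.ofReal_toReal_le).trans hGL⟩
  filter_upwards [hGlim, ae_lt_top hGm (ne_top_of_le_ne_top hL hGL)] with x hx hxT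
  refine ((ENNReal.tendsto_toReal hxT.ne).comp hx).congr fun n => ?_
  simp [ENNReal.toReal_prod, hpos]
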